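/- Kostka coefficients are symmetric in the weight: K_{λ/μ, w} = K_{λ/μ, w̄}, where w̄ is the weakly decreasing rearrangement of w. -/

import Mathlib

open scoped BigOperators

/-- A partition: a weakly decreasing sequence of naturals that is eventually zero. -/
def IsPartition (f : ℕ → ℕ) : Prop :=
  (∀ i j, i ≤ j → f j ≤ f i) ∧ ∃ N, ∀ i, N ≤ i → f i = 0

/-- Data of a (skew) filling with entries bounded by `n`: the inner shape `inner`, and for
each row the weakly increasing list of its entries.  The outer shape of the filling is
`inner i + (row i).length`, so skew boxes sit to the left of all entries of a row. -/
structure SkewTab (n : ℕ) where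
  inner : ℕ → ℕ
  row : ℕ → List ℕ

namespace SkewTab

variable {n : ℕ}

/-- The outer shape. -/
def outer (T : SkewTab n) : ℕ → ℕ := fun i => T.inner i + (T.row i).length

/-- The entry in row `i`, column `j` (0-indexed); meaningful for `inner i ≤ j < outer i`. -/
def entry (T : SkewTab n) (i j : ℕ) : ℕ := (T.row i).getD (j - T.inner i) 0

/-- `T` is a semistandard Young tableau of skew shape `outer/inner` with entries in
`{1,…,n}`: both shapes are partitions, rows are weakly increasing and columns are
strictly increasing. -/
def IsSSYT (T : SkewTab n) : Prop :=
  IsPartition T.inner ∧ IsPartition T.outer ∧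
  (∀ i, (T.row i).Pairwise (· ≤ ·)) ∧
  (∀ i, ∀ x ∈ T.row i, 1 ≤ x ∧ x ≤ n) ∧
  (∀ i j, T.inner i ≤ j → j < T.outer i → T.inner (i+1) ≤ j → j < T.outer (i+1) →
    T.entry i j < T.entry (i+1) j)

/-- Tableau insertion `T1 ⊠ T2`: concatenate corresponding rows and sort each row
weakly increasingly; the skew boxes (inner shapes) add up and are pushed to the left,
i.e. treated as smaller than all numbered entries. -/
def ins (T1 T2 : SkewTab n) : SkewTab n where
  inner := fun i => T1.inner i + T2.inner i
  row := fun i => (T1.row i ++ T2.row i).mergeSort (fun a b => decide (a ≤ b))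

/-- The empty tableau. -/
def empty : SkewTab n := ⟨fun _ => 0, fun _ => []⟩

/-- The weight of `T`: `wt T k` is the number of boxes with entry `k`. -/
noncomputable def wt (T : SkewTab n) (k : ℕ) : ℕ := ∑ᶠ i, (T.row i).count k

/-- The `c`-th column of `T` (0-indexed), viewed as a single-column skew tableau
(keeping its skew boxes). -/
def col (T : SkewTab n) (c : ℕ) : SkewTab n where
  inner := fun i => if c < T.inner i then 1 else 0
  row := fun i =>
    if T.inner i ≤ c ∧ c < T.outer i then [(T.row i).getD (c - T.inner i) 0] else []

end SkewTab

/-- The set of SSYTs of shape `mu/nu` with entries in `{1,…,n}`. -/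
def Tabs (n : ℕ) (mu nu : ℕ → ℕ) : Set (SkewTab n) :=
  {T | T.IsSSYT ∧ T.inner = nu ∧ T.outer = mu}

/-- The monomial `x^w = x₁^{w₁} ⋯ xₙ^{wₙ}`. -/
noncomputable def xpow (n : ℕ) (w : Fin n → ℕ) : MvPolynomial (Fin n) ℤ :=
  ∏ k : Fin n, MvPolynomial.X k ^ w k

/-- The monomial `x^{w(T)}` attached to a tableau `T` (variable `x_k` corresponds to
the entry `k ∈ {1,…,n}`). -/
noncomputable def xwt {n : ℕ} (T : SkewTab n) : MvPolynomial (Fin n) ℤ :=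
  xpow n (fun k => T.wt ((k : ℕ) + 1))

/-- The skew Schur polynomial `s_{mu/nu}(x₁,…,xₙ) = Σ_T x^{w(T)}`. -/
noncomputable def schur (n : ℕ) (mu nu : ℕ → ℕ) : MvPolynomial (Fin n) ℤ :=
  ∑ᶠ T ∈ Tabs n mu nu, xwt T

/-- The Kostka number `K_{lam/mu,w}`: the number of SSYTs of shape `lam/mu` with
entries in `{1,…,n}` and weight `w`. -/
noncomputable def kostka (n : ℕ) (lam mu : ℕ → ℕ) (w : Fin n → ℕ) : ℕ :=
  Nat.card {T : SkewTab n // T ∈ Tabs n lam mu ∧ ∀ k : Fin n, T.wt ((k : ℕ) + 1) = w k}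

/-- The monomial symmetric polynomial `m_w`: the sum of `x^u` over the distinct
rearrangements `u` of `w`. -/
noncomputable def mSym (n : ℕ) (w : Fin n → ℕ) : MvPolynomial (Fin n) ℤ :=
  ∑ᶠ u ∈ {u : Fin n → ℕ | ∃ σ : Equiv.Perm (Fin n), u = w ∘ σ}, xpow n u

/-- The characteristic polynomial `χ(t) = ∏_{T ∈ T^n_{mu/nu}} (t − x^{w(T)})`. -/
noncomputable def charPoly (n : ℕ) (mu nu : ℕ → ℕ) : Polynomial (MvPolynomial (Fin n) ℤ) :=
  ∏ᶠ T ∈ Tabs n mu nu, (Polynomial.X - Polynomial.C (xwt T))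

/-- `mu/nu` sits inside `alpha/beta`: there is an injection `f` of column positions such
that for every row, column `j` of `mu/nu` has a cell (resp. a skew box) exactly when
column `f j` of `alpha/beta` does; i.e. every column of the diagram of `mu/nu` can be
found among the columns of the diagram of `alpha/beta`, counting multiplicities. -/
def SitsInside (mu nu alpha beta : ℕ → ℕ) : Prop :=
  ∃ f : ℕ → ℕ, Function.Injective f ∧
    ∀ j i, ((nu i ≤ j ∧ j < mu i) ↔ (beta i ≤ f j ∧ f j < alpha i)) ∧
      (j < nu i ↔ f j < beta i)

/-!
Bender–Knuth involutions. Fix `1 ≤ v < n`. In a semistandard tableau call an entry `v` lying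
directly above a `v + 1`, and that `v + 1`, fixed; in each row the remaining free `v`'s and
`v + 1`'s form a contiguous segment. Exchanging, in every row, the numbers of free `v`'s and free
`v + 1`'s gives a semistandard tableau of the same shape with the same fixed pairs, in which the
multiplicities of `v` and `v + 1` are exchanged. Applying it twice gives back the tableau, so
`K_{λ/μ,w}` is invariant under adjacent transpositions of `w`, and these generate all permutations.
-/

section BlockList

open List

variable {P Q : List ℕ} {v a b p : ℕ}

def blockList (P : List ℕ) (v a b : ℕ) (Q : List ℕ) : List ℕ :=
  P ++ replicate a v ++ replicate b (v + 1) ++ Q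

theorem length_blockList : (blockList P v a b Q).length = P.length + a + b + Q.length := by
  simp only [blockList, length_append, length_replicate]

theorem mem_blockList {x : ℕ} :
    x ∈ blockList P v a b Q → x ∈ P ∨ x = v ∨ x = v + 1 ∨ x ∈ Q := by
  simp only [blockList, mem_append]
  rintro (((hx | hx) | hx) | hx)
  exacts [Or.inl hx, Or.inr (Or.inl (eq_of_mem_replicate hx)),
    Or.inr (Or.inr (Or.inl (eq_of_mem_replicate hx))), Or.inr (Or.inr (Or.inr hx))]

theorem count_blockList (x : ℕ) : (blockList P v a b Q).count x =
    P.count x + (if v = x then a else 0) + (if v + 1 = x then b else 0) + Q.count x := by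
  simp only [blockList, count_append, count_replicate, beq_iff_eq]

theorem count_blockList_self (hP : ∀ z ∈ P, z < v) (hQ : ∀ z ∈ Q, v + 1 < z) :
    (blockList P v a b Q).count v = a := by
  rw [count_blockList, count_eq_zero.2 fun h => (hP v h).false,
    count_eq_zero.2 fun h => by have := hQ v h; omega]
  simp

theorem count_blockList_succ (hP : ∀ z ∈ P, z < v) (hQ : ∀ z ∈ Q, v + 1 < z) :
    (blockList P v a b Q).count (v + 1) = b := by
  rw [count_blockList, count_eq_zero.2 fun h => by have := hP _ h; omega,
    count_eq_zero.2 fun h => (hQ _ h).false]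
  simp

theorem pairwise_blockList (hP : ∀ z ∈ P, z < v) (hQ : ∀ z ∈ Q, v + 1 < z)
    (hPs : P.Pairwise (· ≤ ·)) (hQs : Q.Pairwise (· ≤ ·)) :
    (blockList P v a b Q).Pairwise (· ≤ ·) := by
  simp only [blockList, pairwise_append, pairwise_replicate, mem_append]
  refine ⟨⟨⟨hPs, by simp, ?_⟩, by simp, ?_⟩, hQs, ?_⟩
  · intro x hx y hy
    rw [eq_of_mem_replicate hy]; exact (hP x hx).le
  · rintro x (hx | hx) y hy
    · rw [eq_of_mem_replicate hy]; have := hP x hx; omega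
    · rw [eq_of_mem_replicate hy, eq_of_mem_replicate hx]; omega
  · rintro x ((hx | hx) | hx) y hy <;> have := hQ y hy
    · have := hP x hx; omega
    · rw [eq_of_mem_replicate hx]; omega
    · rw [eq_of_mem_replicate hx]; omega

theorem filter_lt_blockList (hP : ∀ z ∈ P, z < v) (hQ : ∀ z ∈ Q, v + 1 < z) :
    (blockList P v a b Q).filter (· < v) = P := by
  have hQ' : Q.filter (· < v) = [] :=
    filter_eq_nil_iff.2 fun z hz => by have := hQ z hz; simp; omega
  simpa [blockList, hQ'] using hP

theorem filter_gt_blockList (hP : ∀ z ∈ P, z < v) (hQ : ∀ z ∈ Q, v + 1 < z) :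
    (blockList P v a b Q).filter (v + 1 < ·) = Q := by
  have hP' : P.filter (v + 1 < ·) = [] :=
    filter_eq_nil_iff.2 fun z hz => by have := hP z hz; simp; omega
  simpa [blockList, hP'] using hQ

theorem getD_blockList_of_lt (h : p < P.length) : (blockList P v a b Q).getD p 0 = P.getD p 0 := by
  simp only [blockList, append_assoc]
  exact getD_append _ _ _ _ h

theorem getD_blockList_of_mem_left (h₁ : P.length ≤ p) (h₂ : p < P.length + a) :
    (blockList P v a b Q).getD p 0 = v := by
  simp only [blockList, append_assoc]
  rw [getD_append_right _ _ _ _ h₁, getD_append _ _ _ _ (by simp; omega),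
    getD_replicate _ (by omega)]

theorem getD_blockList_of_mem_right (h₁ : P.length + a ≤ p) (h₂ : p < P.length + a + b) :
    (blockList P v a b Q).getD p 0 = v + 1 := by
  simp only [blockList, append_assoc]
  rw [getD_append_right _ _ _ _ (by omega), getD_append_right _ _ _ _ (by simp; omega),
    getD_append _ _ _ _ (by simp; omega), getD_replicate _ (by simp; omega)]

theorem getD_blockList_of_ge (h : P.length + a + b ≤ p) :
    (blockList P v a b Q).getD p 0 = Q.getD (p - (P.length + a + b)) 0 := by
  rw [blockList, getD_append_right _ _ _ _ (by simp; omega)]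
  simp only [length_append, length_replicate]

theorem getD_blockList_lt (hP : ∀ z ∈ P, z < v) (h : p < P.length) :
    (blockList P v a b Q).getD p 0 < v := by
  rw [getD_blockList_of_lt h, getD_eq_getElem _ _ h]
  exact hP _ (getElem_mem h)

theorem lt_getD_blockList (hQ : ∀ z ∈ Q, v + 1 < z) (h₁ : P.length + a + b ≤ p)
    (h₂ : p < (blockList P v a b Q).length) : v + 1 < (blockList P v a b Q).getD p 0 := by
  rw [length_blockList] at h₂
  rw [getD_blockList_of_ge h₁, getD_eq_getElem _ _ (by omega)]
  exact hQ _ (getElem_mem _)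

theorem getD_blockList_eq_iff (hP : ∀ z ∈ P, z < v) (hQ : ∀ z ∈ Q, v + 1 < z)
    (hp : p < (blockList P v a b Q).length) :
    (blockList P v a b Q).getD p 0 = v ↔ P.length ≤ p ∧ p < P.length + a := by
  have hlt : p < P.length → (blockList P v a b Q).getD p 0 < v := getD_blockList_lt hP
  have hgt : P.length + a + b ≤ p → v + 1 < (blockList P v a b Q).getD p 0 :=
    (lt_getD_blockList hQ · hp)
  have hright : P.length + a ≤ p → p < P.length + a + b →
      (blockList P v a b Q).getD p 0 = v + 1 := getD_blockList_of_mem_right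
  refine ⟨fun h => ?_, fun h => getD_blockList_of_mem_left h.1 h.2⟩
  omega

theorem getD_blockList_eq_succ_iff (hP : ∀ z ∈ P, z < v) (hQ : ∀ z ∈ Q, v + 1 < z)
    (hp : p < (blockList P v a b Q).length) :
    (blockList P v a b Q).getD p 0 = v + 1 ↔ P.length + a ≤ p ∧ p < P.length + a + b := by
  have hlt : p < P.length → (blockList P v a b Q).getD p 0 < v := getD_blockList_lt hP
  have hgt : P.length + a + b ≤ p → v + 1 < (blockList P v a b Q).getD p 0 :=
    (lt_getD_blockList hQ · hp)
  have hleft : P.length ≤ p → p < P.length + a → (blockList P v a b Q).getD p 0 = v :=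
    getD_blockList_of_mem_left
  refine ⟨fun h => ?_, fun h => getD_blockList_of_mem_right h.1 h.2⟩
  omega

theorem getD_blockList_eq_or {a' b' : ℕ} (h : a + b = a' + b') (p : ℕ) :
    (blockList P v a' b' Q).getD p 0 = (blockList P v a b Q).getD p 0 ∨
      (v ≤ (blockList P v a b Q).getD p 0 ∧ (blockList P v a b Q).getD p 0 ≤ v + 1 ∧
        v ≤ (blockList P v a' b' Q).getD p 0 ∧ (blockList P v a' b' Q).getD p 0 ≤ v + 1) := by
  have hmid (a b : ℕ) (h₁ : P.length ≤ p) (h₂ : p < P.length + a + b) :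
      v ≤ (blockList P v a b Q).getD p 0 ∧ (blockList P v a b Q).getD p 0 ≤ v + 1 := by
    rcases lt_or_ge p (P.length + a) with h₃ | h₃
    · rw [getD_blockList_of_mem_left h₁ h₃]; omega
    · rw [getD_blockList_of_mem_right h₃ h₂]; omega
  rcases lt_or_ge p P.length with h₁ | h₁
  · left; rw [getD_blockList_of_lt h₁, getD_blockList_of_lt h₁]
  rcases lt_or_ge p (P.length + a + b) with h₂ | h₂
  · right; exact ⟨(hmid a b h₁ h₂).1, (hmid a b h₁ h₂).2, hmid a' b' h₁ (by omega)⟩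
  · left; rw [getD_blockList_of_ge h₂, getD_blockList_of_ge (by omega), add_assoc, add_assoc, h]

theorem List.Pairwise.eq_blockList {r : List ℕ} (hr : r.Pairwise (· ≤ ·)) (v : ℕ) :
    r = blockList (r.filter (· < v)) v (r.count v) (r.count (v + 1)) (r.filter (v + 1 < ·)) := by
  refine Perm.eq_of_pairwise' hr
    (pairwise_blockList (by simp) (by simp) (hr.filter _) (hr.filter _))
    (perm_iff_count.2 fun x => ?_)
  have count_filter_ite (q : ℕ → Bool) : (r.filter q).count x = if q x then r.count x else 0 := by
    split_ifs with hq
    · exact count_filter hq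
    · exact count_eq_zero.2 fun hx => hq (mem_filter.1 hx).2
  rw [count_blockList, count_filter_ite, count_filter_ite]
  split_ifs <;> simp_all <;> omega

end BlockList

namespace SkewTab

open Finset

variable {n : ℕ} {T : SkewTab n} {v i j : ℕ}

theorem ext {T T' : SkewTab n} (h₁ : T.inner = T'.inner) (h₂ : T.row = T'.row) : T = T' := by
  cases T
  cases T'
  congr

def IsCell (T : SkewTab n) (i j : ℕ) : Prop := T.inner i ≤ j ∧ j < T.outer i

theorem IsCell.sub_inner_lt_length (hj : T.IsCell i j) : j - T.inner i < (T.row i).length := by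
  obtain ⟨h₁, h₂⟩ := hj
  unfold outer at h₂
  omega

theorem IsSSYT.inner_succ_le (hT : T.IsSSYT) (i : ℕ) : T.inner (i + 1) ≤ T.inner i :=
  hT.1.1 i (i + 1) i.le_succ

theorem IsSSYT.outer_succ_le (hT : T.IsSSYT) (i : ℕ) : T.outer (i + 1) ≤ T.outer i :=
  hT.2.1.1 i (i + 1) i.le_succ

theorem IsSSYT.row_pairwise (hT : T.IsSSYT) (i : ℕ) : (T.row i).Pairwise (· ≤ ·) :=
  hT.2.2.1 i

theorem IsSSYT.entry_lt_entry_succ (hT : T.IsSSYT) (h : T.IsCell i j) (h' : T.IsCell (i + 1) j) :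
    T.entry i j < T.entry (i + 1) j :=
  hT.2.2.2.2 i j h.1 h.2 h'.1 h'.2

theorem IsSSYT.entry_le_entry (hT : T.IsSSYT) {j' : ℕ} (h₁ : T.inner i ≤ j) (hjj' : j ≤ j')
    (h₂ : j' < T.outer i) : T.entry i j ≤ T.entry i j' := by
  have hlen : j' - T.inner i < (T.row i).length := by unfold outer at h₂; omega
  rw [entry, entry, List.getD_eq_getElem _ _ (by omega), List.getD_eq_getElem _ _ hlen]
  rcases (Nat.sub_le_sub_right hjj' (T.inner i)).eq_or_lt with h | h
  · simp only [h, le_refl]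
  · exact List.pairwise_iff_getElem.1 (hT.row_pairwise i) _ _ _ _ h

theorem IsSSYT.exists_row_eq_nil (hT : T.IsSSYT) : ∃ N, ∀ i, N ≤ i → T.row i = [] := by
  obtain ⟨N, hN⟩ := hT.2.1.2
  refine ⟨N, fun i hi => List.eq_nil_of_length_eq_zero ?_⟩
  have := hN i hi
  unfold outer at this
  omega

theorem wt_eq_sum_range {N : ℕ} (h : ∀ i, N ≤ i → T.row i = []) (k : ℕ) :
    T.wt k = ∑ i ∈ range N, (T.row i).count k := by
  refine finsum_eq_sum_of_support_subset _ fun i hi => ?_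
  by_contra hiN
  simp_all

theorem IsSSYT.row_eq_blockList (hT : T.IsSSYT) (v i : ℕ) :
    T.row i = blockList ((T.row i).filter (· < v)) v ((T.row i).count v)
      ((T.row i).count (v + 1)) ((T.row i).filter (v + 1 < ·)) :=
  (hT.row_pairwise i).eq_blockList v

def blockStart (T : SkewTab n) (v i : ℕ) : ℕ := T.inner i + ((T.row i).filter (· < v)).length

theorem inner_le_blockStart (v i : ℕ) : T.inner i ≤ T.blockStart v i := Nat.le_add_right _ _

theorem IsSSYT.blockStart_add_le_outer (hT : T.IsSSYT) (v i : ℕ) :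
    T.blockStart v i + (T.row i).count v + (T.row i).count (v + 1) ≤ T.outer i := by
  have hlen := congrArg List.length (hT.row_eq_blockList v i)
  rw [length_blockList] at hlen
  unfold blockStart outer
  omega

theorem IsSSYT.entry_eq_iff (hT : T.IsSSYT) (hj : T.IsCell i j) :
    T.entry i j = v ↔ T.blockStart v i ≤ j ∧ j < T.blockStart v i + (T.row i).count v := by
  have hrow := hT.row_eq_blockList v i
  have hp := hj.sub_inner_lt_length
  rw [hrow] at hp
  rw [entry]
  nth_rw 1 [hrow]
  rw [getD_blockList_eq_iff (by simp) (by simp) hp, blockStart]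
  have := hj.1
  omega

theorem IsSSYT.entry_eq_succ_iff (hT : T.IsSSYT) (hj : T.IsCell i j) :
    T.entry i j = v + 1 ↔ T.blockStart v i + (T.row i).count v ≤ j ∧
      j < T.blockStart v i + (T.row i).count v + (T.row i).count (v + 1) := by
  have hrow := hT.row_eq_blockList v i
  have hp := hj.sub_inner_lt_length
  rw [hrow] at hp
  rw [entry]
  nth_rw 1 [hrow]
  rw [getD_blockList_eq_succ_iff (by simp) (by simp) hp, blockStart]
  have := hj.1
  omega

open Classical in
noncomputable def fixedCols (T : SkewTab n) (v i : ℕ) : Finset ℕ :=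
  (range (T.outer i)).filter fun j =>
    T.IsCell i j ∧ T.IsCell (i + 1) j ∧ T.entry i j = v ∧ T.entry (i + 1) j = v + 1

theorem mem_fixedCols : j ∈ T.fixedCols v i ↔
    T.IsCell i j ∧ T.IsCell (i + 1) j ∧ T.entry i j = v ∧ T.entry (i + 1) j = v + 1 := by
  simp only [fixedCols, mem_filter, mem_range]
  exact ⟨fun h => h.2, fun h => ⟨h.1.2, h⟩⟩

noncomputable def numFixed (T : SkewTab n) (v i : ℕ) : ℕ := #(T.fixedCols v i)

theorem IsSSYT.lt_blockStart_add_numFixed (hT : T.IsSSYT) (hj : j ∈ T.fixedCols v i) :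
    j < T.blockStart v i + T.numFixed v i := by
  obtain ⟨hc, hc', htop, hbot⟩ := mem_fixedCols.1 hj
  have hblock := (hT.entry_eq_iff hc).1 htop
  have hsub : Ico (T.blockStart v i) (j + 1) ⊆ T.fixedCols v i := by
    intro j' hj'
    rw [mem_Ico] at hj'
    have hin := hT.inner_succ_le i
    have hc₁ : T.IsCell i j' :=
      ⟨(T.inner_le_blockStart v i).trans hj'.1, by have := hc.2; omega⟩
    have hc₁' : T.IsCell (i + 1) j' := ⟨by have := hc₁.1; omega, by have := hc'.2; omega⟩
    have htop' : T.entry i j' = v := (hT.entry_eq_iff hc₁).2 (by omega)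
    have hle := hT.entry_le_entry hc₁'.1 (Nat.le_of_lt_succ hj'.2) hc'.2
    have hlt := hT.entry_lt_entry_succ hc₁ hc₁'
    exact mem_fixedCols.2 ⟨hc₁, hc₁', htop', by omega⟩
  have := card_le_card hsub
  rw [Nat.card_Ico] at this
  unfold numFixed
  omega

theorem IsSSYT.blockStart_add_le_add_numFixed (hT : T.IsSSYT) (hj : j ∈ T.fixedCols v i) :
    T.blockStart v (i + 1) + (T.row (i + 1)).count v + (T.row (i + 1)).count (v + 1) ≤
      j + T.numFixed v i := by
  obtain ⟨hc, hc', htop, hbot⟩ := mem_fixedCols.1 hj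
  have hblock := (hT.entry_eq_succ_iff hc').1 hbot
  have hend := hT.blockStart_add_le_outer v (i + 1)
  have hsub : Ico j (T.blockStart v (i + 1) + (T.row (i + 1)).count v +
      (T.row (i + 1)).count (v + 1)) ⊆ T.fixedCols v i := by
    intro j' hj'
    rw [mem_Ico] at hj'
    have hout := hT.outer_succ_le i
    have hc₁' : T.IsCell (i + 1) j' := ⟨by have := hc'.1; omega, by omega⟩
    have hc₁ : T.IsCell i j' := ⟨by have := hc.1; omega, by omega⟩
    have hbot' : T.entry (i + 1) j' = v + 1 := (hT.entry_eq_succ_iff hc₁').2 (by omega)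
    have hle := hT.entry_le_entry hc.1 hj'.1 hc₁.2
    have hlt := hT.entry_lt_entry_succ hc₁ hc₁'
    exact mem_fixedCols.2 ⟨hc₁, hc₁', by omega, hbot'⟩
  have := card_le_card hsub
  rw [Nat.card_Ico] at this
  unfold numFixed
  omega

theorem IsSSYT.numFixed_le_count (hT : T.IsSSYT) (v i : ℕ) :
    T.numFixed v i ≤ (T.row i).count v := by
  have hsub : T.fixedCols v i ⊆
      Ico (T.blockStart v i) (T.blockStart v i + (T.row i).count v) := fun j hj => by
    obtain ⟨hc, -, htop, -⟩ := mem_fixedCols.1 hj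
    exact mem_Ico.2 ((hT.entry_eq_iff hc).1 htop)
  simpa [numFixed] using card_le_card hsub

theorem IsSSYT.numFixed_le_count_succ (hT : T.IsSSYT) (v i : ℕ) :
    T.numFixed v i ≤ (T.row (i + 1)).count (v + 1) := by
  have hsub : T.fixedCols v i ⊆ Ico (T.blockStart v (i + 1) + (T.row (i + 1)).count v)
      (T.blockStart v (i + 1) + (T.row (i + 1)).count v + (T.row (i + 1)).count (v + 1)) :=
    fun j hj => by
      obtain ⟨-, hc', -, hbot⟩ := mem_fixedCols.1 hj
      exact mem_Ico.2 ((hT.entry_eq_succ_iff hc').1 hbot)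
  simpa [numFixed] using card_le_card hsub

noncomputable def numFixedAbove (T : SkewTab n) (v : ℕ) : ℕ → ℕ
  | 0 => 0
  | i + 1 => T.numFixed v i

theorem IsSSYT.numFixedAbove_le_count (hT : T.IsSSYT) (v : ℕ) :
    ∀ i, T.numFixedAbove v i ≤ (T.row i).count (v + 1)
  | 0 => Nat.zero_le _
  | i + 1 => hT.numFixed_le_count_succ v i

theorem sum_range_succ_numFixedAbove (v N : ℕ) :
    ∑ i ∈ range (N + 1), T.numFixedAbove v i = ∑ i ∈ range N, T.numFixed v i := by
  rw [sum_range_succ']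
  rfl

/-- Row `i` receives (fixed `v`'s + free `v + 1`'s) copies of `v` and (fixed `v + 1`'s + free
`v`'s) copies of `v + 1`. -/
noncomputable def benderKnuth (T : SkewTab n) (v : ℕ) : SkewTab n where
  inner := T.inner
  row i := blockList ((T.row i).filter (· < v)) v
    (T.numFixed v i + ((T.row i).count (v + 1) - T.numFixedAbove v i))
    (T.numFixedAbove v i + ((T.row i).count v - T.numFixed v i))
    ((T.row i).filter (v + 1 < ·))

theorem benderKnuth_inner : (T.benderKnuth v).inner = T.inner := rfl

theorem row_benderKnuth : (T.benderKnuth v).row i = blockList ((T.row i).filter (· < v)) v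
    (T.numFixed v i + ((T.row i).count (v + 1) - T.numFixedAbove v i))
    (T.numFixedAbove v i + ((T.row i).count v - T.numFixed v i))
    ((T.row i).filter (v + 1 < ·)) := rfl

theorem IsSSYT.length_row_benderKnuth (hT : T.IsSSYT) (v i : ℕ) :
    ((T.benderKnuth v).row i).length = (T.row i).length := by
  have hlen := congrArg List.length (hT.row_eq_blockList v i)
  have := hT.numFixed_le_count v i
  have := hT.numFixedAbove_le_count v i
  rw [length_blockList] at hlen
  rw [row_benderKnuth, length_blockList]
  omega

theorem IsSSYT.outer_benderKnuth (hT : T.IsSSYT) (v : ℕ) : (T.benderKnuth v).outer = T.outer :=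
  funext fun i => congrArg (T.inner i + ·) (hT.length_row_benderKnuth v i)

theorem IsSSYT.isCell_benderKnuth (hT : T.IsSSYT) :
    (T.benderKnuth v).IsCell i j ↔ T.IsCell i j := by
  rw [IsCell, IsCell, benderKnuth_inner, hT.outer_benderKnuth]

theorem IsSSYT.entry_benderKnuth_eq_or (hT : T.IsSSYT) (v i j : ℕ) :
    (T.benderKnuth v).entry i j = T.entry i j ∨
      (v ≤ T.entry i j ∧ T.entry i j ≤ v + 1 ∧
        v ≤ (T.benderKnuth v).entry i j ∧ (T.benderKnuth v).entry i j ≤ v + 1) := by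
  have := hT.numFixed_le_count v i
  have := hT.numFixedAbove_le_count v i
  have h := getD_blockList_eq_or (P := (T.row i).filter (· < v))
    (Q := (T.row i).filter (v + 1 < ·)) (v := v) (a := (T.row i).count v)
    (b := (T.row i).count (v + 1))
    (a' := T.numFixed v i + ((T.row i).count (v + 1) - T.numFixedAbove v i))
    (b' := T.numFixedAbove v i + ((T.row i).count v - T.numFixed v i)) (by omega) (j - T.inner i)
  rwa [← hT.row_eq_blockList] at h

theorem IsSSYT.entry_benderKnuth_of_mem_fixedCols (hT : T.IsSSYT) (hj : j ∈ T.fixedCols v i) :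
    (T.benderKnuth v).entry i j = v ∧ (T.benderKnuth v).entry (i + 1) j = v + 1 := by
  obtain ⟨hc, hc', htop, hbot⟩ := mem_fixedCols.1 hj
  have htop' := (hT.entry_eq_iff hc).1 htop
  have hbot' := (hT.entry_eq_succ_iff hc').1 hbot
  have hleft := hT.lt_blockStart_add_numFixed hj
  have hright := hT.blockStart_add_le_add_numFixed hj
  have := hT.numFixed_le_count v (i + 1)
  have := hT.numFixed_le_count_succ v i
  unfold blockStart at htop' hbot' hleft hright
  refine ⟨?_, ?_⟩ <;> rw [entry, benderKnuth_inner]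
  · exact getD_blockList_of_mem_left (by omega) (by omega)
  · exact getD_blockList_of_mem_right (by simp only [numFixedAbove]; omega)
      (by simp only [numFixedAbove]; omega)

theorem IsSSYT.isSSYT_benderKnuth (hT : T.IsSSYT) (hv : 1 ≤ v) (hvn : v + 1 ≤ n) :
    (T.benderKnuth v).IsSSYT := by
  refine ⟨hT.1, hT.outer_benderKnuth v ▸ hT.2.1, fun i => ?_, fun i x hx => ?_,
    fun i j h₁ h₂ h₃ h₄ => ?_⟩
  · exact pairwise_blockList (by simp) (by simp) ((hT.row_pairwise i).filter _)
      ((hT.row_pairwise i).filter _)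
  · rcases mem_blockList hx with hx | rfl | rfl | hx
    · exact hT.2.2.2.1 i x (List.mem_of_mem_filter hx)
    · omega
    · omega
    · exact hT.2.2.2.1 i x (List.mem_of_mem_filter hx)
  · have hc : T.IsCell i j := hT.isCell_benderKnuth.1 ⟨h₁, h₂⟩
    have hc' : T.IsCell (i + 1) j := hT.isCell_benderKnuth.1 ⟨h₃, h₄⟩
    have hlt := hT.entry_lt_entry_succ hc hc'
    have htop := hT.entry_benderKnuth_eq_or v i j
    have hbot := hT.entry_benderKnuth_eq_or v (i + 1) j
    have hfixed : T.entry i j = v → T.entry (i + 1) j = v + 1 →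
        (T.benderKnuth v).entry i j = v ∧ (T.benderKnuth v).entry (i + 1) j = v + 1 :=
      fun h h' => hT.entry_benderKnuth_of_mem_fixedCols (mem_fixedCols.2 ⟨hc, hc', h, h'⟩)
    omega

theorem IsSSYT.fixedCols_benderKnuth (hT : T.IsSSYT) (v i : ℕ) :
    (T.benderKnuth v).fixedCols v i = T.fixedCols v i := by
  ext j
  rw [mem_fixedCols, mem_fixedCols, hT.isCell_benderKnuth, hT.isCell_benderKnuth]
  refine ⟨fun ⟨hc, hc', htop, hbot⟩ => ?_, fun h => ⟨h.1, h.2.1,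
    hT.entry_benderKnuth_of_mem_fixedCols (mem_fixedCols.2 h)⟩⟩
  have := hT.entry_benderKnuth_eq_or v i j
  have := hT.entry_benderKnuth_eq_or v (i + 1) j
  have := hT.entry_lt_entry_succ hc hc'
  exact ⟨hc, hc', by omega, by omega⟩

theorem IsSSYT.numFixed_benderKnuth (hT : T.IsSSYT) (v i : ℕ) :
    (T.benderKnuth v).numFixed v i = T.numFixed v i := by
  rw [numFixed, numFixed, hT.fixedCols_benderKnuth]

theorem IsSSYT.numFixedAbove_benderKnuth (hT : T.IsSSYT) (v : ℕ) :
    ∀ i, (T.benderKnuth v).numFixedAbove v i = T.numFixedAbove v i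
  | 0 => rfl
  | i + 1 => hT.numFixed_benderKnuth v i

theorem IsSSYT.benderKnuth_benderKnuth (hT : T.IsSSYT) (v : ℕ) :
    (T.benderKnuth v).benderKnuth v = T := by
  refine ext rfl (funext fun i => ?_)
  have hP : ∀ z ∈ (T.row i).filter (· < v), z < v := by simp
  have hQ : ∀ z ∈ (T.row i).filter (v + 1 < ·), v + 1 < z := by simp
  have := hT.numFixed_le_count v i
  have := hT.numFixedAbove_le_count v i
  conv_rhs => rw [hT.row_eq_blockList v i]
  rw [row_benderKnuth, hT.numFixed_benderKnuth, hT.numFixedAbove_benderKnuth, row_benderKnuth,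
    filter_lt_blockList hP hQ, filter_gt_blockList hP hQ, count_blockList_self hP hQ,
    count_blockList_succ hP hQ]
  congr 1 <;> omega

theorem IsSSYT.count_row_benderKnuth_self (hT : T.IsSSYT) (v i : ℕ) :
    ((T.benderKnuth v).row i).count v + T.numFixedAbove v i =
      T.numFixed v i + (T.row i).count (v + 1) := by
  rw [row_benderKnuth, count_blockList_self (by simp) (by simp)]
  have := hT.numFixedAbove_le_count v i
  omega

theorem IsSSYT.count_row_benderKnuth_succ (hT : T.IsSSYT) (v i : ℕ) :
    ((T.benderKnuth v).row i).count (v + 1) + T.numFixed v i =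
      T.numFixedAbove v i + (T.row i).count v := by
  rw [row_benderKnuth, count_blockList_succ (by simp) (by simp)]
  have := hT.numFixed_le_count v i
  omega

theorem IsSSYT.count_row_benderKnuth_of_ne (hT : T.IsSSYT) {k : ℕ} (hk : k ≠ v)
    (hk' : k ≠ v + 1) (i : ℕ) : ((T.benderKnuth v).row i).count k = (T.row i).count k := by
  conv_rhs => rw [hT.row_eq_blockList v i]
  simp only [row_benderKnuth, count_blockList, if_neg hk.symm, if_neg hk'.symm]

/-- The fixed entries of row `i` that are `v`'s are the fixed `v + 1`'s of row `i + 1`, so on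
summing over rows the fixed entries cancel and only the free ones are exchanged. -/
theorem IsSSYT.wt_benderKnuth (hT : T.IsSSYT) (v : ℕ) :
    (T.benderKnuth v).wt = T.wt ∘ Equiv.swap v (v + 1) := by
  funext k
  obtain ⟨N, hN⟩ := hT.exists_row_eq_nil
  have hN' : ∀ i, N + 1 ≤ i → T.row i = [] := fun i hi => hN i (by omega)
  have hbkN : ∀ i, N + 1 ≤ i → (T.benderKnuth v).row i = [] := fun i hi =>
    List.eq_nil_of_length_eq_zero (by rw [hT.length_row_benderKnuth, hN' i hi]; rfl)
  have hfixed : ∑ i ∈ range (N + 1), T.numFixedAbove v i =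
      ∑ i ∈ range (N + 1), T.numFixed v i := by
    have := hT.numFixed_le_count v N
    rw [hN N le_rfl, List.count_nil, Nat.le_zero] at this
    rw [sum_range_succ_numFixedAbove, sum_range_succ, this, add_zero]
  rw [Function.comp_apply, wt_eq_sum_range hbkN, wt_eq_sum_range hN']
  by_cases hkv : k = v
  · subst hkv
    have := sum_congr rfl fun i (_ : i ∈ range (N + 1)) => hT.count_row_benderKnuth_self k i
    rw [sum_add_distrib, sum_add_distrib, hfixed] at this
    rw [Equiv.swap_apply_left]
    omega
  by_cases hkv' : k = v + 1
  · subst hkv'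
    have := sum_congr rfl fun i (_ : i ∈ range (N + 1)) => hT.count_row_benderKnuth_succ v i
    rw [sum_add_distrib, sum_add_distrib, hfixed] at this
    rw [Equiv.swap_apply_right]
    omega
  rw [Equiv.swap_apply_of_ne_of_ne hkv hkv']
  exact sum_congr rfl fun i _ => hT.count_row_benderKnuth_of_ne hkv hkv' i

theorem benderKnuth_mem_Tabs {lam mu : ℕ → ℕ} (hT : T ∈ Tabs n lam mu) (hv : 1 ≤ v)
    (hvn : v + 1 ≤ n) : T.benderKnuth v ∈ Tabs n lam mu :=
  ⟨hT.1.isSSYT_benderKnuth hv hvn, hT.2.1, (hT.1.outer_benderKnuth v).trans hT.2.2⟩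

end SkewTab

theorem Function.apply_comp_perm_eq_of_apply_comp_swap {α β : Type*} {m : ℕ}
    (F : (Fin m → α) → β)
    (hF : ∀ (w : Fin m → α) (i j : Fin m), (j : ℕ) = i + 1 → F (w ∘ Equiv.swap i j) = F w)
    (σ : Equiv.Perm (Fin m)) (w : Fin m → α) : F (w ∘ σ) = F w := by
  cases m with
  | zero => rw [Subsingleton.elim σ 1]; rfl
  | succ m =>
    have hσ : σ ∈ Submonoid.closure (Set.range fun i : Fin m => Equiv.swap i.castSucc i.succ) := by
      rw [Equiv.Perm.mclosure_swap_castSucc_succ]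
      exact Submonoid.mem_top σ
    induction hσ using Submonoid.closure_induction generalizing w with
    | mem _ h =>
      obtain ⟨i, rfl⟩ := h
      exact hF w _ _ (by simp)
    | one => rfl
    | mul σ τ _ _ hσ hτ => rw [Equiv.Perm.coe_mul, ← Function.comp_assoc, hτ, hσ]

theorem kostka_comp_swap {n : ℕ} (lam mu : ℕ → ℕ) (w : Fin n → ℕ) {i j : Fin n}
    (hij : (j : ℕ) = i + 1) : kostka n lam mu (w ∘ Equiv.swap i j) = kostka n lam mu w := by
  set v := (i : ℕ) + 1
  have hv : 1 ≤ v := by omega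
  have hvn : v + 1 ≤ n := by have := j.isLt; omega
  have hinj : Function.Injective fun k : Fin n => (k : ℕ) + 1 := fun _ _ h =>
    Fin.ext (by simpa using h)
  have hshift (k : Fin n) : Equiv.swap v (v + 1) ((k : ℕ) + 1) = (Equiv.swap i j k : ℕ) + 1 := by
    rw [show v + 1 = (j : ℕ) + 1 by omega]
    exact hinj.swap_apply i j k
  have hwt {T : SkewTab n} {u : Fin n → ℕ} (hT : T.IsSSYT) (hu : ∀ k : Fin n, T.wt (k + 1) = u k)
      (k : Fin n) : (T.benderKnuth v).wt (k + 1) = u (Equiv.swap i j k) := by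
    rw [hT.wt_benderKnuth, Function.comp_apply, hshift, hu]
  exact Nat.card_congr
    { toFun := fun T => ⟨T.1.benderKnuth v, SkewTab.benderKnuth_mem_Tabs T.2.1 hv hvn,
        fun k => by simpa using hwt T.2.1.1 T.2.2 k⟩
      invFun := fun T => ⟨T.1.benderKnuth v, SkewTab.benderKnuth_mem_Tabs T.2.1 hv hvn,
        hwt T.2.1.1 T.2.2⟩
      left_inv := fun T => Subtype.ext (T.2.1.1.benderKnuth_benderKnuth v)
      right_inv := fun T => Subtype.ext (T.2.1.1.benderKnuth_benderKnuth v) }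

theorem kostka_comp_perm {n : ℕ} (lam mu : ℕ → ℕ) (w : Fin n → ℕ) (σ : Equiv.Perm (Fin n)) :
    kostka n lam mu (w ∘ σ) = kostka n lam mu w :=
  Function.apply_comp_perm_eq_of_apply_comp_swap (kostka n lam mu)
    (fun w _ _ hij => kostka_comp_swap lam mu w hij) σ w

theorem kostka_rearrange_general (n : ℕ) (lam mu : ℕ → ℕ)
    (w wbar : Fin n → ℕ) (σ : Equiv.Perm (Fin n)) (hperm : wbar = w ∘ σ) :
    kostka n lam mu w = kostka n lam mu wbar := by
  rw [hperm, kostka_comp_perm]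

/-- Kostka coefficients are symmetric in the weight:
`K_{λ/μ,w} = K_{λ/μ,w̄}` where `w̄` is the weakly decreasing rearrangement of `w`. -/
theorem kostka_rearrange (n : ℕ) (lam mu : ℕ → ℕ)
    (hl : IsPartition lam) (hm : IsPartition mu) (hml : ∀ i, mu i ≤ lam i)
    (w wbar : Fin n → ℕ) (σ : Equiv.Perm (Fin n)) (hperm : wbar = w ∘ σ)
    (hdec : ∀ i j : Fin n, i ≤ j → wbar j ≤ wbar i) :
    kostka n lam mu w = kostka n lam mu wbar :=
  kostka_rearrange_general n lam mu w wbar σ hperm
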